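/- Let Ω ∈ RS(M) and let a ∈ (−1,1) with a ≠ 0. If Ω((z + a)/(1 + za)) = Ω(z) holds for all z ∈ Z := ℂ ∖ ((−∞,−1] ∪ [1,+∞)), then Ω is a constant function; i.e. the only fixed points of the transformation Ω(z) ↦ Ω((z + a)/(1 + za)) of RS(M) are the constant functions. -/

import Mathlib

/-!
For `f ∈ M` the scalar function `φ z = ⟪f, Ω z f⟫` is holomorphic on `Z`, real on `(-1, 1)` and
maps the upper half-plane into itself, so `φ'(x) = lim Im φ(x + iε) / ε ≥ 0` and `φ` is
nondecreasing on `(-1, 1)`. In the coordinate `u = artanh x` the map `w_a` is the translation by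
`artanh a ≠ 0`, so `u ↦ φ (tanh u)` is monotone and periodic, hence constant. Thus `Ω` is
constant on `(-1, 1)`, and by the identity theorem on the connected domain `Z`.
-/

open Complex ContinuousLinearMap

noncomputable section

variable {M : Type*} [NormedAddCommGroup M] [InnerProductSpace ℂ M] [CompleteSpace M]
  [TopologicalSpace.SeparableSpace M]

/-- The domain `Z = ℂ ∖ ((−∞,−1] ∪ [1,+∞))`. -/
def Zdom : Set ℂ := {z : ℂ | z ∉ (fun x : ℝ => (x : ℂ)) '' (Set.Iic (-1) ∪ Set.Ici 1)}

/-- The combined Nevanlinna–Schur class `RS(M)`. -/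
def IsRS (Ω : ℂ → (M →L[ℂ] M)) : Prop :=
  DifferentiableOn ℂ Ω Zdom ∧
  (∀ z ∈ Zdom, Ω (starRingEnd ℂ z) = adjoint (Ω z)) ∧
  (∀ z ∈ Zdom, z.im ≠ 0 → ∀ f : M, 0 ≤ z.im * (inner ℂ f (Ω z f) : ℂ).im) ∧
  (∀ x : ℝ, -1 < x → x < 1 →
    ((1 : M →L[ℂ] M) - Ω (x : ℂ)).IsPositive ∧ ((1 : M →L[ℂ] M) + Ω (x : ℂ)).IsPositive)

open Function Set Filter Topology

theorem Function.Periodic.eq_of_monotone {α β : Type*} [AddCommGroup α] [LinearOrder α]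
    [IsOrderedAddMonoid α] [Archimedean α] [PartialOrder β] {h : α → β} {c : α}
    (hp : Periodic h c) (hc : c ≠ 0) (hm : Monotone h) (x y : α) : h x = h y := by
  have hp' : Periodic h |c| := by
    rcases abs_choice c with hc' | hc' <;> rw [hc']
    exacts [hp, hp.neg]
  have key : ∀ x y, h x ≤ h y := fun x y ↦ by
    obtain ⟨n, hn⟩ := Archimedean.arch (x - y) (abs_pos.mpr hc)
    calc h x ≤ h (y + n • |c|) := hm (sub_le_iff_le_add'.mp hn)
      _ = h y := hp'.nsmul n y
  exact (key x y).antisymm (key y x)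

theorem Real.tanh_add (x y : ℝ) :
    Real.tanh (x + y) = (Real.tanh x + Real.tanh y) / (1 + Real.tanh x * Real.tanh y) := by
  have hx := (Real.cosh_pos x).ne'
  have hy := (Real.cosh_pos y).ne'
  simp only [Real.tanh_eq_sinh_div_cosh, Real.sinh_add, Real.cosh_add]
  field_simp

theorem Real.monotone_tanh : Monotone Real.tanh := fun x y hxy ↦ by
  rwa [← Real.artanh_le_artanh_iff ⟨Real.neg_one_lt_tanh x, Real.tanh_lt_one x⟩
    ⟨Real.neg_one_lt_tanh y, Real.tanh_lt_one y⟩, Real.artanh_tanh, Real.artanh_tanh]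

/-- Fermat's rule in the direction `I`: `Im φ` attains its minimum over the upper half-plane
at `x`. -/
theorem HasDerivAt.re_nonneg_of_im_nonneg {φ : ℂ → ℂ} {φ' : ℂ} {x : ℝ} (hφ : HasDerivAt φ φ' x)
    (hx : (φ x).im = 0) (hpos : ∀ z : ℂ, 0 < z.im → 0 ≤ (φ z).im) : 0 ≤ φ'.re := by
  have hmin : IsLocalMinOn (fun z ↦ (φ z).im) {z | 0 < z.im} x :=
    eventually_of_mem self_mem_nhdsWithin fun z hz ↦ by
      simpa only [hx] using hpos z hz
  have hderiv := Complex.imCLM.hasFDerivAt.comp (x : ℂ) (hφ.hasFDerivAt.restrictScalars ℝ)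
  have hI : Complex.I ∈ posTangentConeAt {z : ℂ | 0 < z.im} x :=
    mem_posTangentConeAt_of_frequently_mem <| Eventually.frequently <|
      eventually_nhdsWithin_of_forall fun t (ht : 0 < t) ↦ by simpa using ht
  simpa using hmin.hasFDerivWithinAt_nonneg hderiv.hasFDerivWithinAt hI

theorem monotoneOn_re_of_im_nonneg {φ : ℂ → ℂ} {s : Set ℝ} (hs : Convex ℝ s)
    (hd : ∀ x ∈ s, DifferentiableAt ℂ φ x) (hreal : ∀ x ∈ s, (φ x).im = 0)
    (hpos : ∀ z : ℂ, 0 < z.im → 0 ≤ (φ z).im) : MonotoneOn (fun x : ℝ ↦ (φ x).re) s :=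
  monotoneOn_of_hasDerivWithinAt_nonneg hs
    (fun x hx ↦ (hd x hx).hasDerivAt.real_of_complex.continuousAt.continuousWithinAt)
    (fun x hx ↦ (hd x (interior_subset hx)).hasDerivAt.real_of_complex.hasDerivWithinAt)
    (fun x hx ↦ (hd x (interior_subset hx)).hasDerivAt.re_nonneg_of_im_nonneg
      (hreal x (interior_subset hx)) hpos)

theorem eq_apply_zero_of_mobius_invariant {φ : ℂ → ℂ} {a : ℝ} (ha : a ∈ Ioo (-1) 1) (ha0 : a ≠ 0)
    (hd : ∀ x ∈ Ioo (-1 : ℝ) 1, DifferentiableAt ℂ φ x)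
    (hreal : ∀ x ∈ Ioo (-1 : ℝ) 1, (φ x).im = 0) (hpos : ∀ z : ℂ, 0 < z.im → 0 ≤ (φ z).im)
    (hinv : ∀ x ∈ Ioo (-1 : ℝ) 1, φ ((x + a) / (1 + x * a)) = φ x) :
    ∀ x ∈ Ioo (-1 : ℝ) 1, φ x = φ 0 := by
  have htanh (u : ℝ) : Real.tanh u ∈ Ioo (-1 : ℝ) 1 :=
    ⟨Real.neg_one_lt_tanh u, Real.tanh_lt_one u⟩
  set h : ℝ → ℝ := fun u ↦ (φ (Real.tanh u)).re
  have hmono : Monotone h := fun u v huv ↦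
    monotoneOn_re_of_im_nonneg (convex_Ioo _ _) hd hreal hpos (htanh u) (htanh v)
      (Real.monotone_tanh huv)
  have hper : Periodic h (Real.artanh a) := fun u ↦ by
    simp only [h, Real.tanh_add, Real.tanh_artanh ha, Complex.ofReal_div, Complex.ofReal_add,
      Complex.ofReal_mul, Complex.ofReal_one, hinv _ (htanh u)]
  have hartanh : Real.artanh a ≠ 0 := fun h0 ↦ ha0 <| by
    rw [← Real.tanh_artanh ha, h0, Real.tanh_zero]
  intro x hx
  apply Complex.ext
  · simpa only [h, Real.tanh_artanh hx, Real.tanh_zero, Complex.ofReal_zero] using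
      hper.eq_of_monotone hartanh hmono (Real.artanh x) 0
  · simpa using (hreal x hx).trans (hreal 0 ⟨by norm_num, by norm_num⟩).symm

theorem mem_Zdom_iff {z : ℂ} : z ∈ Zdom ↔ z.im ≠ 0 ∨ z.re ∈ Ioo (-1) 1 := by
  simp only [Zdom, mem_ofPred_eq, mem_image, not_exists, not_and, mem_union, mem_Iic, mem_Ici,
    mem_Ioo]
  constructor
  · intro h
    by_contra! hc
    refine h z.re ?_ (Complex.ext rfl hc.1.symm)
    by_contra! hre
    exact (hc.2 hre.1).not_gt hre.2
  · rintro (him | ⟨h1, h2⟩) x hx rfl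
    · simp at him
    · simp only [Complex.ofReal_re] at h1 h2
      rcases hx with hx | hx <;> linarith

theorem ofReal_mem_Zdom {x : ℝ} (hx : x ∈ Ioo (-1) 1) : (x : ℂ) ∈ Zdom :=
  mem_Zdom_iff.mpr (Or.inr (by simpa using hx))

theorem zero_mem_Zdom : (0 : ℂ) ∈ Zdom := by
  simpa using ofReal_mem_Zdom (x := 0) (by norm_num)

theorem isOpen_Zdom : IsOpen Zdom :=
  (Complex.isometry_ofReal.isClosedEmbedding.isClosedMap _
    (isClosed_Iic.union isClosed_Ici)).isOpen_compl

theorem starConvex_Zdom : StarConvex ℝ 0 Zdom := by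
  intro y hy t s _ hs _
  rw [smul_zero, zero_add]
  rcases hs.eq_or_lt with rfl | hs
  · simpa using zero_mem_Zdom
  rw [mem_Zdom_iff] at hy ⊢
  rcases hy with him | ⟨h1, h2⟩
  · exact Or.inl (by simpa using ⟨hs.ne', him⟩)
  · refine Or.inr ⟨?_, ?_⟩ <;> simp only [Complex.smul_re, smul_eq_mul] <;> nlinarith

theorem eqOn_Zdom_of_eqOn_Ioo {E : Type*} [NormedAddCommGroup E] [NormedSpace ℂ E]
    [CompleteSpace E] {F : ℂ → E} (hF : DifferentiableOn ℂ F Zdom)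
    (h : ∀ x ∈ Ioo (-1 : ℝ) 1, F x = F 0) : ∀ z ∈ Zdom, F z = F 0 := by
  have hreal : Tendsto ((↑) : ℝ → ℂ) (𝓝[≠] 0) (𝓝[≠] 0) := by
    simpa using ((hasDerivAt_id (0 : ℝ)).ofReal_comp).tendsto_nhdsNE one_ne_zero
  have hfreq : ∃ᶠ z in 𝓝[≠] (0 : ℂ), F z = F 0 :=
    hreal.frequently <| (eventually_nhdsWithin_of_eventually_nhds
      (Ioo_mem_nhds (by norm_num) (by norm_num))).frequently.mono h
  exact (hF.analyticOnNhd isOpen_Zdom).eqOn_of_preconnected_of_frequently_eq analyticOnNhd_const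
    (starConvex_Zdom.isPathConnected zero_mem_Zdom).isConnected.isPreconnected zero_mem_Zdom hfreq

theorem ContinuousLinearMap.eq_of_inner_self_eq {V : Type*} [NormedAddCommGroup V]
    [InnerProductSpace ℂ V] {S T : V →L[ℂ] V} (h : ∀ f, inner ℂ f (S f) = inner ℂ f (T f)) :
    S = T :=
  coe_injective <| (ext_inner_map _ _).mp fun f ↦ by
    simp only [coe_coe]
    rw [← inner_conj_symm, h, inner_conj_symm]

/-- If `Ω ∈ RS(M)` and for some `a ∈ (−1,1)`, `a ≠ 0`, one has
`Ω((z + a)/(1 + za)) = Ω(z)` for all `z ∈ Z`, then `Ω` is constant on `Z`; i.e. the only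
fixed points of the transformation `Ω(z) ↦ Ω((z + a)/(1 + za))` are constant functions. -/
theorem fixed_points_of_mobius_composition (Ω : ℂ → (M →L[ℂ] M)) (hRS : IsRS Ω)
    (a : ℝ) (ha : a ∈ Set.Ioo (-1 : ℝ) 1) (ha0 : a ≠ 0)
    (hfix : ∀ z ∈ Zdom, Ω ((z + (a : ℂ)) / (1 + z * (a : ℂ))) = Ω z) :
    ∀ z ∈ Zdom, ∀ w ∈ Zdom, Ω z = Ω w := by
  obtain ⟨hdiff, hsym, hnev, -⟩ := hRS
  have hselfAdjoint (x : ℝ) (hx : x ∈ Ioo (-1 : ℝ) 1) : IsSelfAdjoint (Ω x) := by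
    simpa [isSelfAdjoint_iff'] using (hsym x (ofReal_mem_Zdom hx)).symm
  have hreal (x : ℝ) (hx : x ∈ Ioo (-1 : ℝ) 1) : Ω x = Ω 0 :=
    ContinuousLinearMap.eq_of_inner_self_eq fun f ↦
      eq_apply_zero_of_mobius_invariant (φ := fun z ↦ inner ℂ f (Ω z f)) ha ha0
        (fun y hy ↦ (innerSL ℂ f).differentiableAt.comp _ <|
          (hdiff.differentiableAt (isOpen_Zdom.mem_nhds (ofReal_mem_Zdom hy))).clm_apply
            (differentiableAt_const f))
        (fun y hy ↦ by simpa using (hselfAdjoint y hy).isSymmetric.im_inner_self_apply f)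
        (fun z hz ↦ nonneg_of_mul_nonneg_right
          (hnev z (mem_Zdom_iff.mpr (Or.inl hz.ne')) hz.ne' f) hz)
        (fun y hy ↦ by simp only [hfix y (ofReal_mem_Zdom hy)]) x hx
  intro z hz w hw
  rw [eqOn_Zdom_of_eqOn_Ioo hdiff hreal z hz, eqOn_Zdom_of_eqOn_Ioo hdiff hreal w hw]
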